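/- arXiv:math/0403534 — 2 statements merged into one kernel-verified Lean document; each statement's English description precedes it below -/
import Mathlib

section
/- Let L be a finite meet-distributive meet-semilattice with join-irreducibles P. For α ∈ L and T ⊆ S(α), the pair (∅, T) is not an independent pair of L; moreover, for any p ∈ S(α) \ T, the pair ({p}, T) is not an independent pair of L. -/
open scoped Classical

/-- An element of a poset is *join-irreducible* if it covers exactly one element. -/
def JoinIrred {L : Type*} [Preorder L] (a : L) : Prop := ∃! b : L, b ⋖ a

/-- `ell α = {p ∈ P : p ≤ α}`, the set of join-irreducible elements below `α`. -/
def ell {L : Type*} [Preorder L] (a : L) : Set L := {p | JoinIrred p ∧ p ≤ a}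

/-- The set of join-irreducible elements. -/
def Pset (L : Type*) [Preorder L] : Set L := {p | JoinIrred p}

/-- The set `N(α)` of lower neighbors of `α`, as a finset. -/
noncomputable def NF {L : Type*} [Preorder L] [Fintype L] (a : L) : Finset L :=
  Finset.univ.filter (fun b => b ⋖ a)

/-- `ell` as a finset. -/
noncomputable def ellF {L : Type*} [Preorder L] [Fintype L] (a : L) : Finset L :=
  Finset.univ.filter (fun p => JoinIrred p ∧ p ≤ a)

/-- `α' = ⋀ N(α)`, the meet of all lower neighbors of `α` (with `α' = α` if `N(α) = ∅`). -/
noncomputable def lowMeet {L : Type*} [SemilatticeInf L] [Fintype L] (a : L) : L :=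
  if h : (NF a).Nonempty then (NF a).inf' h id else a

/-- `S(α) = ℓ(α) \ ℓ(α')`. -/
noncomputable def SF {L : Type*} [SemilatticeInf L] [Fintype L] (a : L) : Finset L :=
  ellF a \ ellF (lowMeet a)

/-- An interval `[γ, β]` is Boolean if it is order-isomorphic to some `2^[k]`. -/
def IsBooleanInterval {L : Type*} [Preorder L] (γ β : L) : Prop :=
  ∃ k : ℕ, Nonempty ((Set.Icc γ β) ≃o Set (Fin k))

/-- A poset is meet-distributive if each interval `[γ, β]` such that `γ` is the meet of
the lower neighbors of `β` in `[γ, β]` is Boolean. -/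
def MeetDistributive (L : Type*) [Preorder L] : Prop :=
  ∀ γ β : L, γ ≤ β → IsGLB {x | γ ≤ x ∧ x ⋖ β} γ → IsBooleanInterval γ β

/-- A pair `(A, B)` of subsets of `P` is independent if each `α` with `B ⊆ ℓ(α)`
satisfies `A ∩ ℓ(α) ≠ ∅`. -/
def Indep {L : Type*} [Preorder L] (A B : Set L) : Prop :=
  ∀ α : L, B ⊆ ell α → (A ∩ ell α).Nonempty

/-- `⟨B⟩`, the poset ideal of `P` generated by `B ⊆ P`. -/
def idealGen {L : Type*} [Preorder L] (B : Set L) : Set L :=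
  {p | JoinIrred p ∧ ∃ q ∈ B, p ≤ q}

/-- `M(B)`, the set of maximal elements of `B`. -/
def maxElems {L : Type*} [Preorder L] (B : Set L) : Set L :=
  {b ∈ B | ∀ c ∈ B, b ≤ c → c = b}

/-!
By meet-distributivity the interval `[α', α]` is Boolean, so for distinct lower covers `β₁, β₃`
of `α` the meet `β₁ ⊓ β₃` is a lower cover of `β₃`, and `β₁ ⊓ β₃ ≠ β₂ ⊓ β₃` for a third cover
`β₂`. Passing from `α` to such a cover, induction on `α` shows that a lower cover `β ⋖ α` misses
at most one element of `ℓ(α)`. An element `p ∈ S(α)` is not below `α'`, hence not below some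
lower cover `β`; then `T ⊆ S(α) \ {p}` lies below `β` while `p` does not, so `β` witnesses that
`({p}, T)` is not independent, and `α` does so for `(∅, T)`.
-/

open Set

lemma Set.Icc.coe_covBy_coe {M : Type*} [Preorder M] {a b : M} {x y : Icc a b} :
    (x : M) ⋖ y ↔ x ⋖ y :=
  OrdConnected.apply_covBy_apply_iff (OrderEmbedding.subtype (· ∈ Icc a b)) <| by
    rw [OrderEmbedding.coe_subtype, Subtype.range_coe_subtype]
    exact ordConnected_Icc

lemma CovBy.inf_covBy_of_covBy {M : Type*} [Lattice M] [IsLowerModularLattice M] {a b t : M}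
    (ha : a ⋖ t) (hb : b ⋖ t) (hab : a ≠ b) : a ⊓ b ⋖ b :=
  inf_covBy_of_covBy_sup_left <| (ha.wcovBy.sup_eq hb.wcovBy hab).symm ▸ ha

lemma CovBy.inf_ne_inf_of_covBy {M : Type*} [DistribLattice M] {a b c t : M} (ha : a ⋖ t)
    (hb : b ⋖ t) (hc : c ⋖ t) (hab : a ≠ b) (hac : a ≠ c) : a ⊓ c ≠ b ⊓ c := by
  intro habc
  have hca : c ≤ a := calc
    c = c ⊓ (a ⊔ b) := by rw [ha.wcovBy.sup_eq hb.wcovBy hab, inf_eq_left.2 hc.le]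
    _ = a ⊓ c := by rw [inf_sup_left, inf_comm c b, ← habc, inf_comm, sup_idem]
    _ ≤ a := inf_le_left
  exact hac (hca.eq_or_lt.resolve_right fun hlt => hc.2 hlt ha.lt).symm

namespace OrderIso

variable {M N : Type*} [SemilatticeInf M] [DistribLattice N] {a b c t : M}

lemma inf_covBy_of_covBy (e : M ≃o N) (ha : a ⋖ t) (hb : b ⋖ t) (hab : a ≠ b) : a ⊓ b ⋖ b := by
  have := ((apply_covBy_apply_iff e).2 ha).inf_covBy_of_covBy ((apply_covBy_apply_iff e).2 hb)
    (e.injective.ne hab)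
  rwa [← e.map_inf, apply_covBy_apply_iff] at this

lemma inf_ne_inf_of_covBy (e : M ≃o N) (ha : a ⋖ t) (hb : b ⋖ t) (hc : c ⋖ t) (hab : a ≠ b)
    (hac : a ≠ c) : a ⊓ c ≠ b ⊓ c := by
  have := ((apply_covBy_apply_iff e).2 ha).inf_ne_inf_of_covBy ((apply_covBy_apply_iff e).2 hb)
    ((apply_covBy_apply_iff e).2 hc) (e.injective.ne hab) (e.injective.ne hac)
  rwa [← e.map_inf, ← e.map_inf, e.injective.ne_iff] at this

end OrderIso

section MeetSemilattice

variable {L : Type*} [SemilatticeInf L] [Fintype L] {p q α β β₁ β₂ β₃ : L}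

lemma mem_NF : β ∈ NF α ↔ β ⋖ α := by simp [NF]

lemma mem_SF : p ∈ SF α ↔ JoinIrred p ∧ p ≤ α ∧ ¬ p ≤ lowMeet α := by
  simp only [SF, ellF, Finset.mem_sdiff, Finset.mem_filter, Finset.mem_univ, true_and]
  tauto

lemma lowMeet_le (hβ : β ⋖ α) : lowMeet α ≤ β := by
  rw [lowMeet, dif_pos ⟨β, mem_NF.2 hβ⟩]
  exact Finset.inf'_le id (mem_NF.2 hβ)

lemma le_lowMeet (hpα : p ≤ α) (h : ∀ β, β ⋖ α → p ≤ β) : p ≤ lowMeet α := by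
  unfold lowMeet
  split_ifs with hne
  · exact Finset.le_inf' hne id fun β hβ => h β (mem_NF.1 hβ)
  · exact hpα

lemma lowMeet_le_self (α : L) : lowMeet α ≤ α := by
  by_cases hne : (NF α).Nonempty
  · obtain ⟨β, hβ⟩ := hne
    exact (lowMeet_le (mem_NF.1 hβ)).trans (mem_NF.1 hβ).le
  · rw [lowMeet, dif_neg hne]

lemma exists_covBy_not_le_of_not_le_lowMeet (hpα : p ≤ α) (hp : ¬ p ≤ lowMeet α) :
    ∃ β, β ⋖ α ∧ ¬ p ≤ β := by
  by_contra! h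
  exact hp (le_lowMeet hpα h)

lemma isGLB_lowMeet (hβ : β ⋖ α) : IsGLB {x | lowMeet α ≤ x ∧ x ⋖ α} (lowMeet α) :=
  ⟨fun _ hx => hx.1, fun _ hb =>
    le_lowMeet ((hb ⟨lowMeet_le hβ, hβ⟩).trans hβ.le) fun _ hx => hb ⟨lowMeet_le hx, hx⟩⟩

lemma JoinIrred.le_of_lt_of_covBy (hq : JoinIrred q) (hpq : p < q) (hβ : β ⋖ q) : p ≤ β := by
  obtain ⟨γ, hpγ, hγ⟩ := exists_le_covBy_of_lt hpq
  exact hq.unique hγ hβ ▸ hpγ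

namespace MeetDistributive

lemma exists_orderIso_Icc_lowMeet (h : MeetDistributive L) (hβ : β ⋖ α) :
    ∃ k, Nonempty (Icc (lowMeet α) α ≃o Set (Fin k)) :=
  h _ _ (lowMeet_le_self α) (isGLB_lowMeet hβ)

lemma inf_covBy (h : MeetDistributive L) (h₁ : β₁ ⋖ α) (h₂ : β₂ ⋖ α) (h₁₂ : β₁ ≠ β₂) :
    β₁ ⊓ β₂ ⋖ β₂ := by
  obtain ⟨k, ⟨e⟩⟩ := h.exists_orderIso_Icc_lowMeet h₁
  exact Icc.coe_covBy_coe.2 <| e.inf_covBy_of_covBy (t := ⟨α, lowMeet_le_self α, le_rfl⟩)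
    (a := ⟨β₁, lowMeet_le h₁, h₁.le⟩) (b := ⟨β₂, lowMeet_le h₂, h₂.le⟩)
    (Icc.coe_covBy_coe.1 h₁) (Icc.coe_covBy_coe.1 h₂) (Subtype.mk_eq_mk.not.2 h₁₂)

lemma inf_ne_inf (h : MeetDistributive L) (h₁ : β₁ ⋖ α) (h₂ : β₂ ⋖ α) (h₃ : β₃ ⋖ α)
    (h₁₂ : β₁ ≠ β₂) (h₁₃ : β₁ ≠ β₃) : β₁ ⊓ β₃ ≠ β₂ ⊓ β₃ := by
  obtain ⟨k, ⟨e⟩⟩ := h.exists_orderIso_Icc_lowMeet h₁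
  have := e.inf_ne_inf_of_covBy (t := ⟨α, lowMeet_le_self α, le_rfl⟩)
    (a := ⟨β₁, lowMeet_le h₁, h₁.le⟩) (b := ⟨β₂, lowMeet_le h₂, h₂.le⟩)
    (c := ⟨β₃, lowMeet_le h₃, h₃.le⟩) (Icc.coe_covBy_coe.1 h₁) (Icc.coe_covBy_coe.1 h₂)
    (Icc.coe_covBy_coe.1 h₃) (Subtype.mk_eq_mk.not.2 h₁₂) (Subtype.mk_eq_mk.not.2 h₁₃)
  exact fun heq => this (Subtype.ext heq)

lemma covBy_eq_of_not_le (h : MeetDistributive L) (hq : JoinIrred q) (hqα : q ≤ α)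
    (h₁ : β₁ ⋖ α) (h₂ : β₂ ⋖ α) (hq₁ : ¬ q ≤ β₁) (hq₂ : ¬ q ≤ β₂) : β₁ = β₂ := by
  induction α using WellFoundedLT.induction generalizing β₁ β₂ with
  | _ α ih =>
  obtain rfl | hqα := hqα.eq_or_lt
  · exact hq.unique h₁ h₂
  obtain ⟨β₃, hqβ₃, h₃⟩ := exists_le_covBy_of_lt hqα
  have h₁₃ : β₁ ≠ β₃ := by rintro rfl; exact hq₁ hqβ₃
  have h₂₃ : β₂ ≠ β₃ := by rintro rfl; exact hq₂ hqβ₃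
  by_contra h₁₂
  exact h.inf_ne_inf h₁ h₂ h₃ h₁₂ h₁₃ <| ih β₃ h₃.lt hqβ₃ (h.inf_covBy h₁ h₃ h₁₃)
    (h.inf_covBy h₂ h₃ h₂₃) (fun hle => hq₁ (hle.trans inf_le_left))
    (fun hle => hq₂ (hle.trans inf_le_left))

lemma joinIrred_eq_of_not_le (h : MeetDistributive L) (hβ : β ⋖ α) (hp : JoinIrred p)
    (hq : JoinIrred q) (hpα : p ≤ α) (hqα : q ≤ α) (hpβ : ¬ p ≤ β) (hqβ : ¬ q ≤ β) : p = q := by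
  induction α using WellFoundedLT.induction generalizing β with
  | _ α ih =>
  obtain rfl | hpα := hpα.eq_or_lt
  · by_contra hpq
    exact hqβ (hp.le_of_lt_of_covBy (hqα.lt_of_ne (Ne.symm hpq)) hβ)
  obtain rfl | hqα := hqα.eq_or_lt
  · exact absurd (hq.le_of_lt_of_covBy hpα hβ) hpβ
  obtain ⟨β', hpβ', hβ'⟩ := exists_le_covBy_of_lt hpα
  have hββ' : β ≠ β' := by rintro rfl; exact hpβ hpβ'
  have hqβ' : q ≤ β' := by_contra fun hqβ' => hββ' (h.covBy_eq_of_not_le hq hqα.le hβ hβ' hqβ hqβ')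
  exact ih β' hβ'.lt (h.inf_covBy hβ hβ' hββ') hpβ' hqβ' (fun hle => hpβ (hle.trans inf_le_left))
    (fun hle => hqβ (hle.trans inf_le_left))

end MeetDistributive

end MeetSemilattice

/-- for `T ⊆ S(α)`, the pair `(∅, T)` is not independent, and for
`p ∈ S(α) \ T` the pair `({p}, T)` is not independent. -/
theorem not_indep_of_subset_S {L : Type*} [SemilatticeInf L] [Fintype L]
    (h : MeetDistributive L) (α : L) (T : Set L) (hT : T ⊆ (↑(SF α) : Set L)) :
    ¬ Indep (∅ : Set L) T ∧ ∀ p ∈ (↑(SF α) : Set L) \ T, ¬ Indep ({p} : Set L) T := by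
  have hTα : T ⊆ ell α := fun t ht => ⟨(mem_SF.1 (hT ht)).1, (mem_SF.1 (hT ht)).2.1⟩
  refine ⟨fun hI => (hI α hTα).ne_empty (empty_inter _), ?_⟩
  rintro p ⟨hpS, hpT⟩ hI
  obtain ⟨hp, hpα, hp'⟩ := mem_SF.1 hpS
  obtain ⟨β, hβ, hpβ⟩ := exists_covBy_not_le_of_not_le_lowMeet hpα hp'
  have hTβ : T ⊆ ell β := by
    intro t ht
    obtain ⟨ht', htα, -⟩ := mem_SF.1 (hT ht)
    refine ⟨ht', by_contra fun htβ => hpT ?_⟩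
    rwa [h.joinIrred_eq_of_not_le hβ hp ht' hpα htα hpβ htβ]
  obtain ⟨_, rfl, hpβ'⟩ := hI β hTβ
  exact hpβ hpβ'.2
end

section
/- Let L be a finite meet-distributive meet-semilattice with join-irreducibles P, and let Γ_L be the simplicial complex whose facets are F_α = {x_q : q ∈ P \ ℓ(α)} ∪ {y_q : q ∈ ℓ(α)} for α ∈ L. Then for the number f_j(Γ_L) of faces of Γ_L of cardinality j+1 we have f_j(Γ_L) = Σ_{i=0}^{j+1} C(|P| − i, |P| − j − 1) · |{α ∈ L : |N(α)| = i}|. -/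
open scoped Classical

/-- The facet `F_α = {x_q : q ∈ P \ ℓ(α)} ∪ {y_q : q ∈ ℓ(α)}` of the Alexander dual,
with `x`'s modelled as `Sum.inl` and `y`'s as `Sum.inr`. -/
noncomputable def FacetF {L : Type*} [Preorder L] [Fintype L] (α : L) : Finset (L ⊕ L) :=
  ((Finset.univ.filter (fun p : L => JoinIrred p)) \ ellF α).image Sum.inl ∪
    (ellF α).image Sum.inr

section AuxProofs
set_option linter.unusedSectionVars false

open Finset

variable {L : Type*} [SemilatticeInf L] [Fintype L]

lemma mem_ellF {a p : L} : p ∈ ellF a ↔ JoinIrred p ∧ p ≤ a := by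
  simp [ellF]

lemma ellF_mono {a b : L} (hab : a ≤ b) : ellF a ⊆ ellF b := by
  intro p hp
  rw [mem_ellF] at *
  exact ⟨hp.1, hp.2.trans hab⟩

lemma ellF_inf (a b : L) : ellF (a ⊓ b) = ellF a ∩ ellF b := by
  ext p
  simp only [mem_ellF, Finset.mem_inter, le_inf_iff]
  tauto

lemma mem_NF_s18 {a γ : L} : γ ∈ NF a ↔ γ ⋖ a := by simp [NF]

lemma exists_joinIrred_not_le (a : L) : ∀ b < a, ∃ p, JoinIrred p ∧ p ≤ a ∧ ¬ p ≤ b := by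
  induction a using WellFoundedLT.induction with
  | _ a IH =>
    intro b hb
    obtain ⟨γ₁, hbγ₁, hγ₁⟩ := exists_le_covBy_of_lt hb
    by_cases h2 : ∃ γ₂, γ₂ ⋖ a ∧ γ₂ ≠ γ₁
    · obtain ⟨γ₂, hγ₂, hne⟩ := h2
      have h2b : ¬ γ₂ ≤ b := by
        intro hle
        have h21 : γ₂ < γ₁ := lt_of_le_of_ne (hle.trans hbγ₁) hne
        exact hγ₂.2 h21 hγ₁.lt
      have hlt : γ₂ ⊓ b < γ₂ := inf_lt_left.2 h2b
      obtain ⟨p, hp, hpγ₂, hpb⟩ := IH γ₂ hγ₂.lt _ hlt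
      exact ⟨p, hp, hpγ₂.trans hγ₂.le, fun hple => hpb (le_inf hpγ₂ hple)⟩
    · push_neg at h2
      refine ⟨a, ⟨γ₁, hγ₁, fun b hb => h2 b hb⟩, le_rfl, fun hle => lt_irrefl _ (hb.trans_le hle)⟩

lemma ellF_ssubset {a b : L} (hba : b < a) : ellF b ⊂ ellF a := by
  obtain ⟨p, hp, hpa, hpb⟩ := exists_joinIrred_not_le a b hba
  refine ⟨ellF_mono hba.le, fun hsub => ?_⟩
  have := hsub (mem_ellF.2 ⟨hp, hpa⟩)
  exact hpb (mem_ellF.1 this).2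

lemma ellF_inj {a b : L} (hab : ellF a = ellF b) : a = b := by
  have h1 : a ⊓ b = a := by
    by_contra hne
    have hlt : a ⊓ b < a := lt_of_le_of_ne inf_le_left hne
    have := ellF_ssubset hlt
    rw [ellF_inf, hab, Finset.inter_self] at this
    exact this.2 this.1
  have h2 : a ⊓ b = b := by
    by_contra hne
    have hlt : a ⊓ b < b := lt_of_le_of_ne inf_le_right hne
    have := ellF_ssubset hlt
    rw [ellF_inf, hab, Finset.inter_self] at this
    exact this.2 this.1
  rw [← h1, h2]

lemma lowMeet_le_s18 (a : L) : lowMeet a ≤ a := by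
  unfold lowMeet
  split_ifs with h
  · obtain ⟨γ, hγ⟩ := h
    exact (Finset.inf'_le id hγ).trans (mem_NF_s18.1 hγ).le
  · exact le_rfl

lemma lowMeet_le_cover {a γ : L} (hγ : γ ⋖ a) : lowMeet a ≤ γ := by
  have hne : (NF a).Nonempty := ⟨γ, mem_NF_s18.2 hγ⟩
  unfold lowMeet
  rw [dif_pos hne]
  exact Finset.inf'_le id (mem_NF_s18.2 hγ)

lemma le_lowMeet_s18 {a b : L} (hne : (NF a).Nonempty) (hb : ∀ γ ∈ NF a, b ≤ γ) :
    b ≤ lowMeet a := by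
  unfold lowMeet
  rw [dif_pos hne]
  exact Finset.le_inf' hne id hb

lemma isGLB_lowMeet_s18 {a : L} (hne : (NF a).Nonempty) :
    IsGLB {x | lowMeet a ≤ x ∧ x ⋖ a} (lowMeet a) := by
  constructor
  · intro x hx
    exact hx.1
  · intro y hy
    refine le_lowMeet_s18 hne fun γ hγ => ?_
    exact hy ⟨lowMeet_le_cover (mem_NF_s18.1 hγ), mem_NF_s18.1 hγ⟩

lemma mem_ellF_lowMeet {a p : L} (hne : (NF a).Nonempty) :
    p ∈ ellF (lowMeet a) ↔ JoinIrred p ∧ ∀ γ ∈ NF a, p ≤ γ := by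
  rw [mem_ellF]
  constructor
  · rintro ⟨hp, hle⟩
    exact ⟨hp, fun γ hγ => hle.trans (lowMeet_le_cover (mem_NF_s18.1 hγ))⟩
  · rintro ⟨hp, hle⟩
    exact ⟨hp, le_lowMeet_s18 hne hle⟩

section IccIso

variable {c a : L} {k : ℕ}

lemma icc_covBy_iff {u w : Set.Icc c a} : u ⋖ w ↔ (u : L) ⋖ (w : L) := by
  constructor
  · rintro ⟨hlt, hmid⟩
    refine ⟨hlt, fun x hux hxw => ?_⟩
    have hx : x ∈ Set.Icc c a := ⟨u.2.1.trans hux.le, hxw.le.trans w.2.2⟩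
    exact hmid (show u < (⟨x, hx⟩ : Set.Icc c a) from hux) hxw
  · rintro ⟨hlt, hmid⟩
    exact ⟨hlt, fun x hux hxw => hmid hux hxw⟩

lemma orderIso_top (e : Set.Icc c a ≃o Set (Fin k)) (hca : c ≤ a) :
    e ⟨a, hca, le_rfl⟩ = Set.univ := by
  apply Set.eq_univ_of_univ_subset
  have h1 : e.symm Set.univ ≤ ⟨a, hca, le_rfl⟩ := (e.symm Set.univ).2.2
  have := e.monotone h1
  rwa [OrderIso.apply_symm_apply] at this

lemma orderIso_inf (e : Set.Icc c a ≃o Set (Fin k)) (u w m : Set.Icc c a)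
    (hm : (m : L) = (u : L) ⊓ (w : L)) : e m = e u ∩ e w := by
  apply subset_antisymm
  · refine Set.subset_inter (e.monotone ?_) (e.monotone ?_)
    · show (m : L) ≤ u; rw [hm]; exact inf_le_left
    · show (m : L) ≤ w; rw [hm]; exact inf_le_right
  · have h1 : e.symm (e u ∩ e w) ≤ u := by
      have := e.symm.monotone (Set.inter_subset_left (s := e u) (t := e w))
      rwa [e.symm_apply_apply] at this
    have h2 : e.symm (e u ∩ e w) ≤ w := by
      have := e.symm.monotone (Set.inter_subset_right (s := e u) (t := e w))
      rwa [e.symm_apply_apply] at this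
    have h3 : e.symm (e u ∩ e w) ≤ m := by
      show (e.symm (e u ∩ e w) : L) ≤ (m : L)
      rw [hm]
      exact le_inf h1 h2
    have := e.monotone h3
    rwa [OrderIso.apply_symm_apply] at this

lemma orderIso_cover (e : Set.Icc c a ≃o Set (Fin k)) (hca : c ≤ a) {γ : L}
    (hγ : γ ⋖ a) (hcγ : c ≤ γ) :
    ∃ i : Fin k, e ⟨γ, hcγ, hγ.le⟩ = Set.univ \ {i} := by
  have hcov : (⟨γ, hcγ, hγ.le⟩ : Set.Icc c a) ⋖ ⟨a, hca, le_rfl⟩ := icc_covBy_iff.2 hγ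
  have : e ⟨γ, hcγ, hγ.le⟩ ⋖ e ⟨a, hca, le_rfl⟩ := (apply_covBy_apply_iff e).2 hcov
  rw [orderIso_top e hca] at this
  obtain ⟨i, -, hi⟩ := CovBy.exists_set_sdiff_singleton this
  exact ⟨i, hi.symm⟩

end IccIso

lemma cover_inf_or (hMD : MeetDistributive L) {a γ u : L} (hγ : γ ⋖ a)
    (hcu : lowMeet a ≤ u) (hu : u ≤ a) : u ≤ γ ∨ γ ⊓ u ⋖ u := by
  have hne : (NF a).Nonempty := ⟨γ, mem_NF_s18.2 hγ⟩
  obtain ⟨k, ⟨e⟩⟩ := hMD (lowMeet a) a (lowMeet_le_s18 a) (isGLB_lowMeet_s18 hne)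
  set c := lowMeet a with hc
  have hca : c ≤ a := lowMeet_le_s18 a
  set gγ : Set.Icc c a := ⟨γ, lowMeet_le_cover hγ, hγ.le⟩ with hgγ
  set gu : Set.Icc c a := ⟨u, hcu, hu⟩ with hgu
  set gm : Set.Icc c a :=
    ⟨γ ⊓ u, le_inf (lowMeet_le_cover hγ) hcu, le_trans inf_le_left hγ.le⟩ with hgm
  obtain ⟨i, hi⟩ := orderIso_cover e hca hγ (lowMeet_le_cover hγ)
  have hinf : e gm = e gγ ∩ e gu := orderIso_inf e gγ gu gm rfl
  by_cases hmem : i ∈ e gu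
  · right
    have hmm : e gm = e gu \ {i} := by
      rw [hinf, hi]
      ext x
      simp only [Set.mem_inter_iff, Set.mem_diff, Set.mem_univ, true_and,
        Set.mem_singleton_iff]
      tauto
    have hcov : e gm ⋖ e gu := by
      rw [hmm]
      exact Set.sdiff_singleton_covBy hmem
    have : gm ⋖ gu := (apply_covBy_apply_iff e).1 hcov
    exact icc_covBy_iff.1 this
  · left
    have hsub : e gu ⊆ e gγ := by
      rw [hi]
      intro x hx
      refine ⟨Set.mem_univ x, ?_⟩
      simp only [Set.mem_singleton_iff]
      rintro rfl
      exact hmem hx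
    have : gu ≤ gγ := by
      have := e.symm.monotone hsub
      rwa [e.symm_apply_apply, e.symm_apply_apply] at this
    exact this

lemma inf_not_le_third (hMD : MeetDistributive L) {a γ₁ γ δ : L} (h1 : γ₁ ⋖ a)
    (hγ : γ ⋖ a) (hδ : δ ⋖ a) (h1γ : γ₁ ≠ γ) (h1δ : γ₁ ≠ δ) : ¬ γ ⊓ δ ≤ γ₁ := by
  have hne : (NF a).Nonempty := ⟨γ, mem_NF_s18.2 hγ⟩
  obtain ⟨k, ⟨e⟩⟩ := hMD (lowMeet a) a (lowMeet_le_s18 a) (isGLB_lowMeet_s18 hne)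
  set c := lowMeet a with hc
  have hca : c ≤ a := lowMeet_le_s18 a
  set g1 : Set.Icc c a := ⟨γ₁, lowMeet_le_cover h1, h1.le⟩ with hg1
  set gγ : Set.Icc c a := ⟨γ, lowMeet_le_cover hγ, hγ.le⟩ with hgγ
  set gδ : Set.Icc c a := ⟨δ, lowMeet_le_cover hδ, hδ.le⟩ with hgδ
  set gm : Set.Icc c a :=
    ⟨γ ⊓ δ, le_inf (lowMeet_le_cover hγ) (lowMeet_le_cover hδ),
      le_trans inf_le_left hγ.le⟩ with hgm
  obtain ⟨i₁, hi₁⟩ := orderIso_cover e hca h1 (lowMeet_le_cover h1)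
  obtain ⟨i, hi⟩ := orderIso_cover e hca hγ (lowMeet_le_cover hγ)
  obtain ⟨l, hl⟩ := orderIso_cover e hca hδ (lowMeet_le_cover hδ)
  have hinf : e gm = e gγ ∩ e gδ := orderIso_inf e gγ gδ gm rfl
  have hii : i₁ ≠ i := by
    rintro rfl
    apply h1γ
    have : e g1 = e gγ := by rw [hi₁, hi]
    have := e.injective this
    exact congrArg Subtype.val this
  have hil : i₁ ≠ l := by
    rintro rfl
    apply h1δ
    have : e g1 = e gδ := by rw [hi₁, hl]
    have := e.injective this
    exact congrArg Subtype.val this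
  intro hle
  have hgle : gm ≤ g1 := hle
  have := e.monotone hgle
  rw [hinf, hi, hl, hi₁] at this
  have hmem : i₁ ∈ (Set.univ \ {i} : Set (Fin k)) ∩ (Set.univ \ {l}) := by
    constructor
    · exact ⟨Set.mem_univ _, by simpa using hii⟩
    · exact ⟨Set.mem_univ _, by simpa using hil⟩
  have := this hmem
  simp at this

lemma covDiff (hMD : MeetDistributive L) :
    ∀ a γ : L, γ ⋖ a → ∃ p, ellF a \ ellF γ = {p} := by
  intro a
  induction a using WellFoundedLT.induction with
  | _ a IH =>
    intro γ₁ hγ₁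
    have hinf_cov : ∀ δ : L, δ ⋖ a → δ ≠ γ₁ → γ₁ ⊓ δ ⋖ δ := by
      intro δ hδ hne
      refine (cover_inf_or hMD hγ₁ (lowMeet_le_cover hδ) hδ.le).resolve_left ?_
      intro hle
      have : δ < γ₁ := lt_of_le_of_ne hle hne
      exact hδ.2 this hγ₁.lt
    by_cases h2 : ∃ γ₂, γ₂ ⋖ a ∧ γ₂ ≠ γ₁
    · obtain ⟨q0, hq0J, hq0a, hq0γ⟩ := exists_joinIrred_not_le a γ₁ hγ₁.lt
      have hq0mem : q0 ∈ ellF a \ ellF γ₁ := by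
        rw [Finset.mem_sdiff, mem_ellF, mem_ellF]
        exact ⟨⟨hq0J, hq0a⟩, fun hh => hq0γ hh.2⟩
      obtain ⟨γ₂, hγ₂, hne2⟩ := h2
      -- each q in the diff set lies in ℓδ \ ℓ(γ₁ ⊓ δ) for some cover δ ≠ γ₁
      have hv : ∀ q ∈ ellF a \ ellF γ₁,
          ∃ δ, δ ⋖ a ∧ δ ≠ γ₁ ∧ q ∈ ellF δ \ ellF (γ₁ ⊓ δ) := by
        intro q hq
        rw [Finset.mem_sdiff, mem_ellF, mem_ellF] at hq
        obtain ⟨⟨hqJ, hqa⟩, hqγ⟩ := hq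
        have hqγ' : ¬ q ≤ γ₁ := fun hle => hqγ ⟨hqJ, hle⟩
        have hqa' : q ≠ a := by
          rintro rfl
          obtain ⟨b, hb, hub⟩ := hqJ
          exact hne2 ((hub γ₂ hγ₂).trans (hub γ₁ hγ₁).symm)
        have hlt : q < a := lt_of_le_of_ne hqa hqa'
        obtain ⟨δ, hqδ, hδ⟩ := exists_le_covBy_of_lt hlt
        have hδne : δ ≠ γ₁ := by
          rintro rfl
          exact hqγ' hqδ
        refine ⟨δ, hδ, hδne, ?_⟩
        rw [Finset.mem_sdiff, mem_ellF, mem_ellF]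
        refine ⟨⟨hqJ, hqδ⟩, ?_⟩
        rintro ⟨-, hle⟩
        exact hqγ' (hle.trans inf_le_left)
      have main : ∀ q ∈ ellF a \ ellF γ₁, ∀ q' ∈ ellF a \ ellF γ₁, q = q' := by
        intro q hq q' hq'
        obtain ⟨δ, hδ, hδ1, hqm⟩ := hv q hq
        obtain ⟨δ', hδ', hδ1', hqm'⟩ := hv q' hq'
        by_cases hdd : δ = δ'
        · subst hdd
          obtain ⟨v, hvset⟩ := IH δ hδ.lt (γ₁ ⊓ δ) (hinf_cov δ hδ hδ1)
          rw [hvset] at hqm hqm'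
          rw [Finset.mem_singleton] at hqm hqm'
          rw [hqm, hqm']
        · -- use ε = δ ⊓ δ'
          set ε := δ ⊓ δ' with hε
          have hεa : ε ≤ a := le_trans inf_le_left hδ.le
          have hεlt : ε < a := lt_of_le_of_lt inf_le_left hδ.lt
          have hτε : γ₁ ⊓ ε ⋖ ε := by
            refine (cover_inf_or hMD hγ₁
              (le_inf (lowMeet_le_cover hδ) (lowMeet_le_cover hδ')) hεa).resolve_left ?_
            exact inf_not_le_third hMD hγ₁ hδ hδ' (Ne.symm hδ1) (Ne.symm hδ1')
          obtain ⟨w, hwset⟩ := IH ε hεlt (γ₁ ⊓ ε) hτε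
          obtain ⟨v, hvset⟩ := IH δ hδ.lt (γ₁ ⊓ δ) (hinf_cov δ hδ hδ1)
          obtain ⟨v', hvset'⟩ := IH δ' hδ'.lt (γ₁ ⊓ δ') (hinf_cov δ' hδ' hδ1')
          have hq_eq_v : q = v := by
            have := hqm; rw [hvset, Finset.mem_singleton] at this; exact this
          have hq_eq_v' : q' = v' := by
            have := hqm'; rw [hvset', Finset.mem_singleton] at this; exact this
          -- w ∈ ellF δ \ ellF (γ₁ ⊓ δ), so w = v
          have hwmem : w ∈ ellF ε \ ellF (γ₁ ⊓ ε) := by rw [hwset]; exact Finset.mem_singleton_self w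
          rw [Finset.mem_sdiff] at hwmem
          have hw_v : w = v := by
            have hwδ : w ∈ ellF δ := ellF_mono inf_le_left hwmem.1
            have hwnot : w ∉ ellF (γ₁ ⊓ δ) := by
              intro hmem
              apply hwmem.2
              have : w ∈ ellF (γ₁ ⊓ δ) ∩ ellF ε := Finset.mem_inter.2 ⟨hmem, hwmem.1⟩
              rw [← ellF_inf] at this
              have heq : γ₁ ⊓ δ ⊓ ε = γ₁ ⊓ ε := by
                rw [hε]
                rw [inf_assoc]
                congr 1
                rw [← inf_assoc, inf_idem]
              rwa [heq] at this
            have : w ∈ ellF δ \ ellF (γ₁ ⊓ δ) := Finset.mem_sdiff.2 ⟨hwδ, hwnot⟩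
            rw [hvset, Finset.mem_singleton] at this
            exact this
          have hw_v' : w = v' := by
            have hwδ : w ∈ ellF δ' := ellF_mono inf_le_right hwmem.1
            have hwnot : w ∉ ellF (γ₁ ⊓ δ') := by
              intro hmem
              apply hwmem.2
              have : w ∈ ellF (γ₁ ⊓ δ') ∩ ellF ε := Finset.mem_inter.2 ⟨hmem, hwmem.1⟩
              rw [← ellF_inf] at this
              have heq : γ₁ ⊓ δ' ⊓ ε = γ₁ ⊓ ε := by
                rw [hε]
                rw [inf_assoc]
                congr 1
                rw [inf_comm δ δ', ← inf_assoc, inf_idem]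
              rwa [heq] at this
            have : w ∈ ellF δ' \ ellF (γ₁ ⊓ δ') := Finset.mem_sdiff.2 ⟨hwδ, hwnot⟩
            rw [hvset', Finset.mem_singleton] at this
            exact this
          rw [hq_eq_v, hq_eq_v', ← hw_v, ← hw_v']
      refine ⟨q0, ?_⟩
      ext q
      rw [Finset.mem_singleton]
      constructor
      · intro hq
        exact main q hq q0 hq0mem
      · rintro rfl
        exact hq0mem
    · -- unique cover: a is join-irreducible
      push_neg at h2
      have haJ : JoinIrred a := ⟨γ₁, hγ₁, fun b hb => h2 b hb⟩
      refine ⟨a, ?_⟩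
      ext q
      rw [Finset.mem_singleton, Finset.mem_sdiff, mem_ellF, mem_ellF]
      constructor
      · rintro ⟨⟨hqJ, hqa⟩, hq⟩
        have hqγ : ¬ q ≤ γ₁ := fun hle => hq ⟨hqJ, hle⟩
        by_contra hne
        have hlt : q < a := lt_of_le_of_ne hqa hne
        obtain ⟨δ, hqδ, hδ⟩ := exists_le_covBy_of_lt hlt
        rw [h2 δ hδ] at hqδ
        exact hqγ hqδ
      · rintro rfl
        refine ⟨⟨haJ, le_rfl⟩, ?_⟩
        rintro ⟨-, hle⟩
        exact lt_irrefl _ (hγ₁.lt.trans_le hle)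

end AuxProofs

section AuxProofs2
set_option linter.unusedSectionVars false

open Finset

variable {L : Type*} [SemilatticeInf L] [Fintype L]

lemma covP (hMD : MeetDistributive L) {a γ : L} (hγ : γ ⋖ a) :
    ∃ p, ellF γ = ellF a \ {p} ∧ p ∈ SF a := by
  obtain ⟨p, hp⟩ := covDiff hMD a γ hγ
  have hsub : ellF γ ⊆ ellF a := ellF_mono hγ.le
  have hγeq : ellF γ = ellF a \ {p} := by
    ext q
    rw [Finset.mem_sdiff, Finset.mem_singleton]
    constructor
    · intro hq
      refine ⟨hsub hq, ?_⟩
      rintro rfl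
      have : q ∈ ellF a \ ellF γ := hp ▸ Finset.mem_singleton_self q
      exact (Finset.mem_sdiff.1 this).2 hq
    · rintro ⟨hqa, hqp⟩
      by_contra hqγ
      have : q ∈ ellF a \ ellF γ := Finset.mem_sdiff.2 ⟨hqa, hqγ⟩
      rw [hp, Finset.mem_singleton] at this
      exact hqp this
  refine ⟨p, hγeq, ?_⟩
  have hpmem : p ∈ ellF a \ ellF γ := hp ▸ Finset.mem_singleton_self p
  rw [Finset.mem_sdiff] at hpmem
  rw [SF, Finset.mem_sdiff]
  refine ⟨hpmem.1, fun hmem => hpmem.2 (ellF_mono (lowMeet_le_cover hγ) hmem)⟩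

lemma SF_card (hMD : MeetDistributive L) (a : L) : (SF a).card = (NF a).card := by
  by_cases hne : (NF a).Nonempty
  · classical
    -- choice function
    have hch : ∀ γ ∈ NF a, ∃ p, ellF γ = ellF a \ {p} ∧ p ∈ SF a := fun γ hγ =>
      covP hMD (mem_NF_s18.1 hγ)
    choose f hf1 hf2 using hch
    have himg : SF a = (NF a).attach.image (fun γ => f γ.1 γ.2) := by
      ext p
      simp only [Finset.mem_image, Finset.mem_attach, true_and, Subtype.exists]
      constructor
      · intro hp
        have hp' := hp
        rw [SF, Finset.mem_sdiff] at hp'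
        obtain ⟨hpa, hpl⟩ := hp'
        rw [mem_ellF_lowMeet hne] at hpl
        push_neg at hpl
        obtain ⟨γ, hγ, hpγ⟩ := hpl (mem_ellF.1 hpa).1
        have hpnot : p ∉ ellF γ := fun hm => hpγ (mem_ellF.1 hm).2
        refine ⟨γ, hγ, ?_⟩
        have hmem : p ∈ ellF a \ ellF γ := Finset.mem_sdiff.2 ⟨hpa, hpnot⟩
        rw [hf1 γ hγ] at hmem
        rw [Finset.mem_sdiff, Finset.mem_sdiff] at hmem
        push_neg at hmem
        have := hmem.2 hmem.1
        rw [Finset.mem_singleton] at this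
        exact this.symm
      · rintro ⟨γ, hγ, rfl⟩
        exact hf2 γ hγ
    have hinj : Set.InjOn (fun γ : {x // x ∈ NF a} => f γ.1 γ.2) (NF a).attach := by
      intro γ₁ h1 γ₂ h2 heq
      simp only at heq
      have : ellF γ₁.1 = ellF γ₂.1 := by
        rw [hf1 γ₁.1 γ₁.2, hf1 γ₂.1 γ₂.2, heq]
      exact Subtype.ext (ellF_inj this)
    rw [himg, Finset.card_image_of_injOn hinj, Finset.card_attach]
  · rw [Finset.not_nonempty_iff_eq_empty] at hne
    have : lowMeet a = a := by unfold lowMeet; rw [dif_neg (by rw [hne]; simp)]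
    rw [SF, this, Finset.sdiff_self, hne]

variable [Nonempty L]

/-- the minimal element `α` with `B ⊆ ℓ(α)`, when it exists. -/
noncomputable def astar (B : Finset L) : L :=
  if h : (Finset.univ.filter fun γ : L => B ⊆ ellF γ).Nonempty then
    (Finset.univ.filter fun γ : L => B ⊆ ellF γ).inf' h id
  else Classical.arbitrary L

lemma astar_le {B : Finset L} {α : L} (hBα : B ⊆ ellF α) : astar B ≤ α := by
  have hmem : α ∈ Finset.univ.filter fun γ : L => B ⊆ ellF γ := by simp [hBα]
  rw [astar, dif_pos ⟨α, hmem⟩]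
  exact Finset.inf'_le id hmem

lemma subset_ellF_astar {B : Finset L} (hB : ∃ α, B ⊆ ellF α) : B ⊆ ellF (astar B) := by
  obtain ⟨α₀, hα₀⟩ := hB
  have hne : (Finset.univ.filter fun γ : L => B ⊆ ellF γ).Nonempty :=
    ⟨α₀, by simp [hα₀]⟩
  rw [astar, dif_pos hne]
  intro p hp
  rw [mem_ellF]
  refine ⟨(mem_ellF.1 (hα₀ hp)).1, ?_⟩
  refine Finset.le_inf' hne id fun γ hγ => ?_
  rw [Finset.mem_filter] at hγ
  exact (mem_ellF.1 (hγ.2 hp)).2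

lemma astar_eq_iff (hMD : MeetDistributive L) {α : L} {B : Finset L}
    (hBα : B ⊆ ellF α) : astar B = α ↔ SF α ⊆ B := by
  constructor
  · intro heq
    intro p hp
    by_contra hpB
    have hpS := hp
    rw [SF, Finset.mem_sdiff] at hpS
    have hneNF : (NF α).Nonempty := by
      by_contra hc
      rw [Finset.not_nonempty_iff_eq_empty] at hc
      have hlm : lowMeet α = α := by unfold lowMeet; rw [dif_neg (by rw [hc]; simp)]
      rw [SF, hlm, Finset.sdiff_self] at hp
      exact absurd hp (Finset.notMem_empty p)
    rw [mem_ellF_lowMeet hneNF] at hpS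
    have hJ : JoinIrred p := (mem_ellF.1 hpS.1).1
    have : ¬ ∀ γ ∈ NF α, p ≤ γ := fun hh => hpS.2 ⟨hJ, hh⟩
    push_neg at this
    obtain ⟨γ, hγ, hpγ⟩ := this
    obtain ⟨p', hp', hp'S⟩ := covP hMD (mem_NF_s18.1 hγ)
    have hpnotγ : p ∉ ellF γ := fun hm => hpγ (mem_ellF.1 hm).2
    have hpp' : p = p' := by
      have : p ∈ ellF α \ ellF γ := Finset.mem_sdiff.2 ⟨hpS.1, hpnotγ⟩
      rw [hp', Finset.mem_sdiff, Finset.mem_sdiff] at this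
      push_neg at this
      have := this.2 this.1
      rwa [Finset.mem_singleton] at this
    have hBγ : B ⊆ ellF γ := by
      rw [hp']
      intro q hq
      rw [Finset.mem_sdiff, Finset.mem_singleton]
      refine ⟨hBα hq, fun hqe => hpB ?_⟩
      rw [hpp', ← hqe]
      exact hq
    have := astar_le hBγ
    rw [heq] at this
    exact absurd (this.trans_lt (mem_NF_s18.1 hγ).lt) (lt_irrefl α)
  · intro hSB
    have hle : astar B ≤ α := astar_le hBα
    by_contra hne
    have hlt : astar B < α := lt_of_le_of_ne hle hne
    obtain ⟨γ, hsγ, hγ⟩ := exists_le_covBy_of_lt hlt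
    obtain ⟨p, hp, hpS⟩ := covP hMD hγ
    have hpB : p ∈ B := hSB hpS
    have hpγ : p ∈ ellF γ := ellF_mono hsγ (subset_ellF_astar ⟨α, hBα⟩ hpB)
    exact absurd hpγ (by rw [hp]; simp)

end AuxProofs2

section AuxProofs3
set_option linter.unusedSectionVars false

open Finset

variable {L : Type*} [SemilatticeInf L] [Fintype L]

/-- The `x`-part of a face. -/
noncomputable def Aof (F : Finset (L ⊕ L)) : Finset L :=
  Finset.univ.filter (fun q => Sum.inl q ∈ F)

/-- The `y`-part of a face. -/
noncomputable def Bof (F : Finset (L ⊕ L)) : Finset L :=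
  Finset.univ.filter (fun q => Sum.inr q ∈ F)

lemma mem_Aof {F : Finset (L ⊕ L)} {q : L} : q ∈ Aof F ↔ Sum.inl q ∈ F := by
  simp [Aof]

lemma mem_Bof {F : Finset (L ⊕ L)} {q : L} : q ∈ Bof F ↔ Sum.inr q ∈ F := by
  simp [Bof]

lemma decompF (F : Finset (L ⊕ L)) :
    F = (Aof F).image Sum.inl ∪ (Bof F).image Sum.inr := by
  ext x
  cases x with
  | inl q => simp [mem_Aof]
  | inr q => simp [mem_Bof]

lemma Aof_encode (X Y : Finset L) :
    Aof (X.image Sum.inl ∪ Y.image Sum.inr) = X := by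
  ext q
  simp [mem_Aof]

lemma Bof_encode (X Y : Finset L) :
    Bof (X.image Sum.inl ∪ Y.image Sum.inr) = Y := by
  ext q
  simp [mem_Bof]

lemma card_decompF (F : Finset (L ⊕ L)) : F.card = (Aof F).card + (Bof F).card := by
  conv_lhs => rw [decompF F]
  rw [Finset.card_union_of_disjoint, Finset.card_image_of_injective _ Sum.inl_injective,
    Finset.card_image_of_injective _ Sum.inr_injective]
  rw [Finset.disjoint_left]
  rintro x hx hy
  rw [Finset.mem_image] at hx hy
  obtain ⟨a, -, rfl⟩ := hx
  obtain ⟨b, -, hb⟩ := hy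
  exact Sum.inl_ne_inr hb.symm

lemma subset_FacetF_iff {α : L} {F : Finset (L ⊕ L)} :
    F ⊆ FacetF α ↔
      Aof F ⊆ (Finset.univ.filter fun p : L => JoinIrred p) \ ellF α ∧ Bof F ⊆ ellF α := by
  constructor
  · intro hF
    constructor
    · intro q hq
      have := hF (mem_Aof.1 hq)
      rw [FacetF, Finset.mem_union] at this
      rcases this with hl | hr
      · rw [Finset.mem_image] at hl
        obtain ⟨b, hb, hbe⟩ := hl
        rwa [← Sum.inl_injective hbe]
      · rw [Finset.mem_image] at hr
        obtain ⟨b, -, hbe⟩ := hr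
        exact absurd hbe.symm Sum.inl_ne_inr
    · intro q hq
      have := hF (mem_Bof.1 hq)
      rw [FacetF, Finset.mem_union] at this
      rcases this with hl | hr
      · rw [Finset.mem_image] at hl
        obtain ⟨b, -, hbe⟩ := hl
        exact absurd hbe Sum.inl_ne_inr
      · rw [Finset.mem_image] at hr
        obtain ⟨b, hb, hbe⟩ := hr
        rwa [← Sum.inr_injective hbe]
  · rintro ⟨hA, hB⟩ x hx
    rw [FacetF, Finset.mem_union]
    cases x with
    | inl q =>
      left
      rw [Finset.mem_image]
      exact ⟨q, hA (mem_Aof.2 hx), rfl⟩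
    | inr q =>
      right
      rw [Finset.mem_image]
      exact ⟨q, hB (mem_Bof.2 hx), rfl⟩

lemma ellF_eq_SF_union (α : L) : ellF α = SF α ∪ ellF (lowMeet α) := by
  rw [SF]
  rw [Finset.sdiff_union_of_subset (ellF_mono (lowMeet_le_s18 α))]

variable [Nonempty L]

lemma fiber_eq_empty (hMD : MeetDistributive L) (j : ℕ) (α : L)
    (hij : j + 1 < (NF α).card) :
    ((Finset.univ.filter (fun F : Finset (L ⊕ L) =>
        F.card = j + 1 ∧ ∃ β : L, F ⊆ FacetF β)).filter
      (fun F => astar (Bof F) = α)) = ∅ := by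
  rw [Finset.eq_empty_iff_forall_notMem]
  intro F hF
  rw [Finset.mem_filter, Finset.mem_filter] at hF
  obtain ⟨⟨-, hcard, β, hβ⟩, hast⟩ := hF
  obtain ⟨-, hBβ⟩ := subset_FacetF_iff.1 hβ
  have hBα : Bof F ⊆ ellF α := by
    rw [← hast]
    exact subset_ellF_astar ⟨β, hBβ⟩
  have hSB : SF α ⊆ Bof F := (astar_eq_iff hMD hBα).1 hast
  have h1 : (SF α).card ≤ (Bof F).card := Finset.card_le_card hSB
  have h2 : (Bof F).card ≤ F.card := by
    rw [card_decompF F]; omega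
  rw [SF_card hMD] at h1
  omega

lemma fiber_card (hMD : MeetDistributive L) (j : ℕ) (α : L)
    (hij : (NF α).card ≤ j + 1) :
    ((Finset.univ.filter (fun F : Finset (L ⊕ L) =>
        F.card = j + 1 ∧ ∃ β : L, F ⊆ FacetF β)).filter
      (fun F => astar (Bof F) = α)).card =
    Nat.choose ((Finset.univ.filter fun p : L => JoinIrred p).card - (NF α).card)
      (j + 1 - (NF α).card) := by
  classical
  set P : Finset L := Finset.univ.filter (fun p : L => JoinIrred p) with hP
  set i : ℕ := (NF α).card with hi
  set U : Finset L := (P \ ellF α) ∪ ellF (lowMeet α) with hU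
  have hPα : ellF α ⊆ P := by
    intro p hp
    rw [hP, Finset.mem_filter]
    exact ⟨Finset.mem_univ p, (mem_ellF.1 hp).1⟩
  have hlmα : ellF (lowMeet α) ⊆ ellF α := ellF_mono (lowMeet_le_s18 α)
  have hSFα : SF α ⊆ ellF α := Finset.sdiff_subset
  have hSFcard : (SF α).card = i := SF_card hMD α
  have d1 : Disjoint (P \ ellF α) (ellF (lowMeet α)) := by
    rw [Finset.disjoint_left]
    intro x hx hy
    exact (Finset.mem_sdiff.1 hx).2 (hlmα hy)
  have d3 : Disjoint (SF α) (ellF (lowMeet α)) := Finset.sdiff_disjoint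
  have hUcard : U.card = P.card - i := by
    rw [hU, Finset.card_union_of_disjoint d1, Finset.card_sdiff_of_subset hPα]
    have h1 : (ellF (lowMeet α)).card ≤ (ellF α).card := Finset.card_le_card hlmα
    have h2 : (ellF α).card ≤ P.card := Finset.card_le_card hPα
    have h3 : (SF α).card = (ellF α).card - (ellF (lowMeet α)).card := by
      rw [SF]; exact Finset.card_sdiff_of_subset hlmα
    omega
  rw [← hUcard, ← Finset.card_powersetCard (j + 1 - i) U]
  apply Finset.card_bij'
    (i := fun F _ => Aof F ∪ (Bof F \ SF α))
    (j := fun C _ => ((C ∩ (P \ ellF α)).image Sum.inl) ∪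
      (((C ∩ ellF (lowMeet α)) ∪ SF α).image Sum.inr))
  -- hi : forward lands in powersetCard
  · intro F hF
    rw [Finset.mem_filter, Finset.mem_filter] at hF
    obtain ⟨⟨-, hcard, β, hβ⟩, hast⟩ := hF
    obtain ⟨hAβ, hBβ⟩ := subset_FacetF_iff.1 hβ
    have hBα : Bof F ⊆ ellF α := by
      rw [← hast]; exact subset_ellF_astar ⟨β, hBβ⟩
    have hSB : SF α ⊆ Bof F := (astar_eq_iff hMD hBα).1 hast
    have hAα : Aof F ⊆ P \ ellF α := by
      intro q hq
      have hqβ := hAβ hq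
      rw [Finset.mem_sdiff] at hqβ ⊢
      refine ⟨hqβ.1, fun hqα => hqβ.2 ?_⟩
      have hsub : ellF α ⊆ ellF β := by
        rw [← hast]
        exact ellF_mono (astar_le hBβ)
      exact hsub hqα
    rw [Finset.mem_powersetCard]
    constructor
    · apply Finset.union_subset
      · exact hAα.trans Finset.subset_union_left
      · refine Finset.Subset.trans ?_ Finset.subset_union_right
        intro q hq
        rw [Finset.mem_sdiff] at hq
        have hqα := hBα hq.1
        rw [ellF_eq_SF_union α, Finset.mem_union] at hqα
        exact hqα.resolve_left hq.2
    · have hdisj : Disjoint (Aof F) (Bof F \ SF α) := by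
        rw [Finset.disjoint_left]
        intro x hx hy
        have := (Finset.mem_sdiff.1 (hAα hx)).2
        exact this (hBα (Finset.mem_sdiff.1 hy).1)
      rw [Finset.card_union_of_disjoint hdisj, Finset.card_sdiff_of_subset hSB]
      have h1 : (SF α).card ≤ (Bof F).card := Finset.card_le_card hSB
      have h2 : F.card = (Aof F).card + (Bof F).card := card_decompF F
      omega
  -- hj : backward lands in faces fiber
  · intro C hC
    rw [Finset.mem_powersetCard] at hC
    obtain ⟨hCU, hCcard⟩ := hC
    set A₀ : Finset L := C ∩ (P \ ellF α) with hA₀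
    set B₀ : Finset L := (C ∩ ellF (lowMeet α)) ∪ SF α with hB₀
    have hAeq : Aof ((A₀.image Sum.inl) ∪ (B₀.image Sum.inr)) = A₀ := Aof_encode _ _
    have hBeq : Bof ((A₀.image Sum.inl) ∪ (B₀.image Sum.inr)) = B₀ := Bof_encode _ _
    have hB₀α : B₀ ⊆ ellF α := by
      apply Finset.union_subset
      · exact Finset.inter_subset_right.trans hlmα
      · exact hSFα
    have hA₀P : A₀ ⊆ P \ ellF α := Finset.inter_subset_right
    rw [Finset.mem_filter, Finset.mem_filter]
    refine ⟨⟨Finset.mem_univ _, ?_, α, ?_⟩, ?_⟩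
    · -- card
      rw [card_decompF, hAeq, hBeq]
      have hb : B₀.card = (C ∩ ellF (lowMeet α)).card + (SF α).card := by
        rw [hB₀]
        apply Finset.card_union_of_disjoint
        rw [Finset.disjoint_left]
        intro x hx hy
        exact (Finset.disjoint_left.1 d3) hy (Finset.mem_inter.1 hx).2
      have hsplit : A₀.card + (C ∩ ellF (lowMeet α)).card = C.card := by
        rw [hA₀, ← Finset.card_union_of_disjoint, ← Finset.inter_union_distrib_left]
        · rw [← hU, Finset.inter_eq_left.2 hCU]
        · exact Finset.disjoint_of_subset_left Finset.inter_subset_right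
            (Finset.disjoint_of_subset_right Finset.inter_subset_right d1)
      omega
    · -- subset facet
      rw [subset_FacetF_iff, hAeq, hBeq]
      exact ⟨hA₀P, hB₀α⟩
    · -- astar
      rw [hBeq]
      exact (astar_eq_iff hMD hB₀α).2 Finset.subset_union_right
  -- left inverse
  · intro F hF
    rw [Finset.mem_filter, Finset.mem_filter] at hF
    obtain ⟨⟨-, hcard, β, hβ⟩, hast⟩ := hF
    obtain ⟨hAβ, hBβ⟩ := subset_FacetF_iff.1 hβ
    have hBα : Bof F ⊆ ellF α := by
      rw [← hast]; exact subset_ellF_astar ⟨β, hBβ⟩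
    have hSB : SF α ⊆ Bof F := (astar_eq_iff hMD hBα).1 hast
    have hAα : Aof F ⊆ P \ ellF α := by
      intro q hq
      have hqβ := hAβ hq
      rw [Finset.mem_sdiff] at hqβ ⊢
      refine ⟨hqβ.1, fun hqα => hqβ.2 ?_⟩
      have hsub : ellF α ⊆ ellF β := by
        rw [← hast]
        exact ellF_mono (astar_le hBβ)
      exact hsub hqα
    set C : Finset L := Aof F ∪ (Bof F \ SF α) with hC
    have e1 : C ∩ (P \ ellF α) = Aof F := by
      ext q
      rw [hC, Finset.mem_inter, Finset.mem_union]
      constructor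
      · rintro ⟨hq1 | hq1, hq2⟩
        · exact hq1
        · exfalso
          exact (Finset.mem_sdiff.1 hq2).2 (hBα (Finset.mem_sdiff.1 hq1).1)
      · intro hq
        exact ⟨Or.inl hq, hAα hq⟩
    have e2 : C ∩ ellF (lowMeet α) = Bof F \ SF α := by
      ext q
      rw [hC, Finset.mem_inter, Finset.mem_union]
      constructor
      · rintro ⟨hq1 | hq1, hq2⟩
        · exfalso
          exact (Finset.mem_sdiff.1 (hAα hq1)).2 (hlmα hq2)
        · exact hq1
      · intro hq
        refine ⟨Or.inr hq, ?_⟩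
        rw [Finset.mem_sdiff] at hq
        have := hBα hq.1
        rw [ellF_eq_SF_union α, Finset.mem_union] at this
        exact this.resolve_left hq.2
    rw [e1, e2, Finset.sdiff_union_of_subset hSB]
    exact (decompF F).symm
  -- right inverse
  · intro C hC
    rw [Finset.mem_powersetCard] at hC
    obtain ⟨hCU, hCcard⟩ := hC
    rw [Aof_encode, Bof_encode]
    have e3 : ((C ∩ ellF (lowMeet α)) ∪ SF α) \ SF α = C ∩ ellF (lowMeet α) := by
      rw [Finset.union_sdiff_right]
      apply Finset.sdiff_eq_self_of_disjoint
      exact Finset.disjoint_of_subset_left Finset.inter_subset_right d3.symm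
    rw [e3, ← Finset.inter_union_distrib_left, ← hU, Finset.inter_eq_left.2 hCU]

end AuxProofs3

/-- the `f`-vector of the Alexander dual:
`f_j(Γ_L) = Σ_{i=0}^{j+1} C(|P|−i, |P|−j−1) · |{α : |N(α)| = i}|`. -/
theorem fvector_formula {L : Type*} [SemilatticeInf L] [Fintype L]
    (h : MeetDistributive L) (j : ℕ)
    (hj : j + 1 ≤ (Finset.univ.filter (fun p : L => JoinIrred p)).card) :
    ((Finset.univ : Finset (Finset (L ⊕ L))).filter
        (fun F => F.card = j + 1 ∧ ∃ α : L, F ⊆ FacetF α)).card =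
    ∑ i ∈ Finset.range (j + 2),
      ((Finset.univ.filter (fun p : L => JoinIrred p)).card - i).choose
          ((Finset.univ.filter (fun p : L => JoinIrred p)).card - (j + 1)) *
        (Finset.univ.filter (fun α : L => (NF α).card = i)).card := by
  classical
  cases isEmpty_or_nonempty L with
  | inl hL =>
    exfalso
    have : (Finset.univ.filter (fun p : L => JoinIrred p)).card = 0 := by
      rw [Finset.univ_eq_empty, Finset.filter_empty]
      rfl
    omega
  | inr hL =>
    have hfib : ((Finset.univ : Finset (Finset (L ⊕ L))).filter
        (fun F => F.card = j + 1 ∧ ∃ α : L, F ⊆ FacetF α)).card =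
        ∑ α ∈ (Finset.univ : Finset L),
          (((Finset.univ : Finset (Finset (L ⊕ L))).filter
            (fun F => F.card = j + 1 ∧ ∃ α : L, F ⊆ FacetF α)).filter
              (fun F => astar (Bof F) = α)).card :=
      Finset.card_eq_sum_card_fiberwise (fun F _ => Finset.mem_univ _)
    rw [hfib]
    set P : Finset L := Finset.univ.filter (fun p : L => JoinIrred p) with hP
    have hval : ∀ α : L,
        (((Finset.univ : Finset (Finset (L ⊕ L))).filter
            (fun F => F.card = j + 1 ∧ ∃ α : L, F ⊆ FacetF α)).filter
              (fun F => astar (Bof F) = α)).card =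
        if (NF α).card ≤ j + 1 then (P.card - (NF α).card).choose (j + 1 - (NF α).card)
        else 0 := by
      intro α
      by_cases hij : (NF α).card ≤ j + 1
      · rw [if_pos hij]
        exact fiber_card h j α hij
      · rw [if_neg hij, fiber_eq_empty h j α (by omega), Finset.card_empty]
    rw [Finset.sum_congr rfl (fun α _ => hval α)]
    rw [← Finset.sum_filter]
    have hmaps : ∀ α ∈ Finset.univ.filter (fun α : L => (NF α).card ≤ j + 1),
        (NF α).card ∈ Finset.range (j + 2) := by
      intro α hα
      rw [Finset.mem_filter] at hα
      rw [Finset.mem_range]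
      omega
    rw [← Finset.sum_fiberwise_of_maps_to hmaps
      (fun α => (P.card - (NF α).card).choose (j + 1 - (NF α).card))]
    apply Finset.sum_congr rfl
    intro i hi
    rw [Finset.mem_range] at hi
    have hile : i ≤ j + 1 := by omega
    have hfe : (Finset.univ.filter (fun α : L => (NF α).card ≤ j + 1)).filter
        (fun α => (NF α).card = i) = Finset.univ.filter (fun α : L => (NF α).card = i) := by
      rw [Finset.filter_filter]
      apply Finset.filter_congr
      intro α _
      constructor
      · tauto
      · intro he
        exact ⟨by omega, he⟩
    rw [hfe]
    have hsum : ∑ α ∈ Finset.univ.filter (fun α : L => (NF α).card = i),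
        (P.card - (NF α).card).choose (j + 1 - (NF α).card) =
        ∑ _α ∈ Finset.univ.filter (fun α : L => (NF α).card = i),
          (P.card - i).choose (j + 1 - i) := by
      apply Finset.sum_congr rfl
      intro α hα
      rw [Finset.mem_filter] at hα
      rw [hα.2]
    rw [hsum, Finset.sum_const, smul_eq_mul]
    have hch : (P.card - i).choose (j + 1 - i) = (P.card - i).choose (P.card - (j + 1)) := by
      have h1 : j + 1 - i ≤ P.card - i := by omega
      have h2 : (P.card - i) - (j + 1 - i) = P.card - (j + 1) := by omega
      rw [← h2]
      exact (Nat.choose_symm h1).symm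
    rw [hch, mul_comm]
end
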